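/- arXiv:1805.05386 — 3 statements merged into one kernel-verified Lean document; each statement's English description precedes it below -/
import Mathlib

section
/- Let φ be a Drinfeld A[t_1,…,t_s]-module of rank r with exponential series exp_φ = Σ_{i≥0} α_i τ^i. Then exp_φ is an entire operator: lim_{i→∞} ord_∞(α_i)/q^i = +∞. More precisely, setting ξ = inf_{1≤k≤r} ord_∞(A_k), one has ord_∞(α_i) ≥ i q^i / r when ξ ≥ 0, and ord_∞(α_i) ≥ q^i( i/r + ξ/(q−1) ) when ξ < 0. -/
open Filter

noncomputable section

/-- Membership in the Tate algebra `𝕋_s` over `K`: the coefficients tend to `0`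
(for every `ε > 0` only finitely many coefficients have norm `≥ ε`). -/
def IsTate (K : Type) [NontriviallyNormedField K] (s : ℕ)
    (f : MvPowerSeries (Fin s) K) : Prop :=
  ∀ ε : ℝ, 0 < ε → {ν : Fin s →₀ ℕ | ε ≤ ‖MvPowerSeries.coeff (R := K) ν f‖}.Finite

/-- The Gauss norm `‖f‖_∞ = sup_ν |a_ν|` on the Tate algebra. -/
def gaussNorm (K : Type) [NontriviallyNormedField K] (s : ℕ)
    (f : MvPowerSeries (Fin s) K) : ℝ :=
  ⨆ ν : Fin s →₀ ℕ, ‖MvPowerSeries.coeff (R := K) ν f‖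

/-- The coefficient-wise twist of a power series induced by a ring endomorphism of `K`. -/
def twPS (K : Type) [NontriviallyNormedField K] (s : ℕ) (τK : K →+* K) :
    MvPowerSeries (Fin s) K →+* MvPowerSeries (Fin s) K :=
  MvPowerSeries.map (σ := Fin s) τK

/-!
In the ultrametric norm `‖θ^{q^i} - θ‖ = q^{q^i}`, so the recursion
`(θ^{q^i} - θ) α_i = Σ_k A_k τ^k(α_{i-k})` makes the coefficients of `α_i` smaller by a factor
`q^{-q^i}` than the largest term on the right, while the Frobenius twist `τ^k` raises coefficient
norms to the power `q^k`. Writing `ξ' = min ξ 0`, strong induction then shows that `ord_∞(α_i)` is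
at least `c_i = i q^i / r + ξ' (q^i - 1)/(q - 1)`: the required inequality
`c_i ≤ q^i + ξ + q^k c_{i-k}` for `1 ≤ k ≤ r` comes from `k ≤ r` and `(q^k - 1)/(q - 1) ≥ 1`.
Since `c_i ≥ q^i (i/r + ξ'/(q - 1))`, all three claims follow.
-/

open Finset MvPowerSeries

section CoeffNorm

variable {K : Type} [NontriviallyNormedField K] {s : ℕ}

theorem gaussNorm_le_of_forall_norm_coeff_le {f : MvPowerSeries (Fin s) K} {C : ℝ}
    (h : ∀ ν, ‖coeff ν f‖ ≤ C) : gaussNorm K s f ≤ C :=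
  ciSup_le h

theorem IsTate.bddAbove_range_norm_coeff {f : MvPowerSeries (Fin s) K} (hf : IsTate K s f) :
    BddAbove (Set.range fun ν => ‖coeff ν f‖) := by
  obtain ⟨C, hC⟩ := ((hf 1 one_pos).image fun ν => ‖coeff ν f‖).bddAbove
  refine ⟨max C 1, ?_⟩
  rintro _ ⟨ν, rfl⟩
  by_cases hν : 1 ≤ ‖coeff ν f‖
  · exact le_max_of_le_left (hC ⟨ν, hν, rfl⟩)
  · exact le_max_of_le_right (le_of_not_ge hν)

theorem IsTate.norm_coeff_le_gaussNorm {f : MvPowerSeries (Fin s) K} (hf : IsTate K s f)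
    (ν : Fin s →₀ ℕ) : ‖coeff ν f‖ ≤ gaussNorm K s f :=
  le_ciSup hf.bddAbove_range_norm_coeff ν

theorem norm_coeff_iterate_twPS {q : ℕ} {τK : K →+* K} (hτK : ∀ x, τK x = x ^ q)
    (f : MvPowerSeries (Fin s) K) (k : ℕ) (ν : Fin s →₀ ℕ) :
    ‖coeff ν ((twPS K s τK)^[k] f)‖ = ‖coeff ν f‖ ^ q ^ k := by
  induction k with
  | zero => simp
  | succ k ih =>
    rw [Function.iterate_succ_apply', twPS, coeff_map, hτK, norm_pow, ← twPS, ih, ← pow_mul,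
      pow_succ]

variable [IsUltrametricDist K]

theorem norm_coeff_mul_le {f g : MvPowerSeries (Fin s) K} {B C : ℝ} (hB : 0 ≤ B)
    (hf : ∀ ν, ‖coeff ν f‖ ≤ B) (hg : ∀ ν, ‖coeff ν g‖ ≤ C) (ν : Fin s →₀ ℕ) :
    ‖coeff ν (f * g)‖ ≤ B * C := by
  classical
  rw [coeff_mul]
  refine IsUltrametricDist.norm_sum_le_of_forall_le_of_nonneg
    (mul_nonneg hB ((norm_nonneg _).trans (hg 0))) fun p _ => ?_
  rw [norm_mul]
  exact mul_le_mul (hf _) (hg _) (norm_nonneg _) hB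

theorem norm_coeff_mul_iterate_twPS_le {q : ℕ} (hq : 0 < q) {τK : K →+* K}
    (hτK : ∀ x, τK x = x ^ q)
    {f g : MvPowerSeries (Fin s) K} {a b : ℝ} (hf : ∀ ν, ‖coeff ν f‖ ≤ (q : ℝ) ^ (-a))
    (hg : ∀ ν, ‖coeff ν g‖ ≤ (q : ℝ) ^ (-b)) {k : ℕ} (ν : Fin s →₀ ℕ) :
    ‖coeff ν (f * (⇑(twPS K s τK))^[k] g)‖ ≤ (q : ℝ) ^ (-(a + (q : ℝ) ^ k * b)) := by
  have hQ0 : (0 : ℝ) < q := by exact_mod_cast hq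
  have hgk (μ : Fin s →₀ ℕ) : ‖coeff μ ((⇑(twPS K s τK))^[k] g)‖ ≤ ((q : ℝ) ^ (-b)) ^ q ^ k := by
    rw [norm_coeff_iterate_twPS hτK]
    exact pow_le_pow_left₀ (norm_nonneg _) (hg μ) _
  calc _ ≤ (q : ℝ) ^ (-a) * ((q : ℝ) ^ (-b)) ^ q ^ k :=
        norm_coeff_mul_le (by positivity) hf hgk ν
    _ = (q : ℝ) ^ (-(a + (q : ℝ) ^ k * b)) := by
        rw [← Real.rpow_natCast, ← Real.rpow_mul hQ0.le, ← Real.rpow_add hQ0]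
        congr 1
        push_cast
        ring

end CoeffNorm

theorem norm_pow_sub_self {K : Type} [NormedField K] [IsUltrametricDist K] {x : K}
    (hx : 1 < ‖x‖) {n : ℕ} (hn : 1 < n) : ‖x ^ n - x‖ = ‖x‖ ^ n := by
  have hlt : ‖x‖ < ‖x‖ ^ n := lt_self_pow₀ hx hn
  rw [sub_eq_add_neg, IsUltrametricDist.norm_add_eq_max_of_norm_ne_norm (by simpa using hlt.ne'),
    norm_pow, norm_neg, max_eq_left hlt.le]

section OrdBound

/-- The lower bound `c_i` for `ord_∞(α_i)`. -/
def ordBound (Q ξ : ℝ) (r i : ℕ) : ℝ :=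
  i * Q ^ i / r + ξ * (Q ^ i - 1) / (Q - 1)

variable {Q ξ : ℝ} {r : ℕ}

@[simp]
theorem ordBound_zero_right : ordBound Q ξ r 0 = 0 := by
  simp [ordBound]

theorem ordBound_le_add_pow_mul_ordBound_sub (hQ : 1 < Q) {ξ' : ℝ} (hξ'0 : ξ' ≤ 0)
    (hξ' : ξ' ≤ ξ) {i k : ℕ} (hk1 : 1 ≤ k) (hkr : k ≤ r) (hki : k ≤ i) :
    ordBound Q ξ' r i ≤ Q ^ i + ξ + Q ^ k * ordBound Q ξ' r (i - k) := by
  have hQ1 : Q - 1 ≠ 0 := by linarith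
  have hr : (0 : ℝ) < r := by exact_mod_cast hk1.trans hkr
  have hpow : Q ^ i = Q ^ k * Q ^ (i - k) := by rw [← pow_add, Nat.add_sub_cancel' hki]
  have hdiff : ordBound Q ξ' r i - Q ^ k * ordBound Q ξ' r (i - k)
      = k * Q ^ i / r + ξ' * ((Q ^ k - 1) / (Q - 1)) := by
    simp only [ordBound, Nat.cast_sub hki, hpow]
    field_simp
    ring
  have hkQ : k * Q ^ i / r ≤ Q ^ i := by
    rw [div_le_iff₀ hr, mul_comm]
    exact mul_le_mul_of_nonneg_left (by exact_mod_cast hkr) (pow_nonneg (by linarith) i)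
  have hgeom : 1 ≤ (Q ^ k - 1) / (Q - 1) := by
    rw [le_div_iff₀ (by linarith)]
    linarith [le_self_pow₀ hQ.le (by omega : k ≠ 0)]
  linarith [mul_le_mul_of_nonpos_left hgeom hξ'0]

theorem pow_mul_add_le_ordBound (hQ : 1 < Q) (hξ : ξ ≤ 0) (i : ℕ) :
    Q ^ i * (i / r + ξ / (Q - 1)) ≤ ordBound Q ξ r i := by
  have hQ1 : Q - 1 ≠ 0 := by linarith
  have hdiff : ordBound Q ξ r i - Q ^ i * (i / r + ξ / (Q - 1)) = -ξ / (Q - 1) := by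
    unfold ordBound
    field_simp
    ring
  linarith [div_nonneg (neg_nonneg.2 hξ) (by linarith : (0 : ℝ) ≤ Q - 1)]

theorem eventually_mul_pow_le_ordBound (hQ : 1 < Q) (hξ : ξ ≤ 0) (hr : 0 < r) (M : ℝ) :
    ∀ᶠ i in atTop, M * Q ^ i ≤ ordBound Q ξ r i := by
  have hlim : Tendsto (fun i : ℕ => (i : ℝ) / r + ξ / (Q - 1)) atTop atTop :=
    tendsto_atTop_add_const_right _ _
      (tendsto_natCast_atTop_atTop.atTop_div_const (by exact_mod_cast hr))
  filter_upwards [hlim.eventually_ge_atTop M] with i hi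
  calc M * Q ^ i ≤ Q ^ i * (i / r + ξ / (Q - 1)) := by
        rw [mul_comm]; exact mul_le_mul_of_nonneg_left hi (pow_nonneg (by linarith) i)
    _ ≤ ordBound Q ξ r i := pow_mul_add_le_ordBound hQ hξ i

end OrdBound

theorem norm_coeff_le_rpow_neg_ordBound {K : Type} [NontriviallyNormedField K]
    [IsUltrametricDist K] {q s r : ℕ} (hq : 1 < q) {τK : K →+* K} (hτK : ∀ x, τK x = x ^ q)
    {θ : K} (hθ : ‖θ‖ = q) {A α : ℕ → MvPowerSeries (Fin s) K} {ξ ξ' : ℝ}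
    (hA : ∀ k ∈ Icc 1 r, ∀ ν, ‖coeff ν (A k)‖ ≤ (q : ℝ) ^ (-ξ)) (hξ'0 : ξ' ≤ 0) (hξ' : ξ' ≤ ξ)
    (hα0 : α 0 = 1)
    (hαrec : ∀ i : ℕ, 1 ≤ i →
      (C (θ ^ q ^ i) - C θ) * α i
        = ∑ k ∈ Icc 1 r, if k ≤ i then A k * (⇑(twPS K s τK))^[k] (α (i - k)) else 0)
    (i : ℕ) (ν : Fin s →₀ ℕ) :
    ‖coeff ν (α i)‖ ≤ (q : ℝ) ^ (-ordBound q ξ' r i) := by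
  have hQ : (1 : ℝ) < q := by exact_mod_cast hq
  have hQ0 : (0 : ℝ) < q := by linarith
  have hq0 : 0 < q := by omega
  induction i using Nat.strong_induction_on generalizing ν with
  | _ i ih =>
  obtain rfl | hi := Nat.eq_zero_or_pos i
  · rw [hα0, coeff_one, ordBound_zero_right, neg_zero, Real.rpow_zero]
    split_ifs <;> simp
  set c := ordBound q ξ' r i
  have hterm : ∀ k ∈ Icc 1 r,
      ‖coeff ν (if k ≤ i then A k * (⇑(twPS K s τK))^[k] (α (i - k)) else 0)‖
        ≤ (q : ℝ) ^ ((q : ℝ) ^ i - c) := by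
    intro k hk
    obtain ⟨hk1, hkr⟩ := mem_Icc.1 hk
    split_ifs with hki
    · refine (norm_coeff_mul_iterate_twPS_le hq0 hτK (hA k hk) (ih (i - k) (by omega)) ν).trans ?_
      exact Real.rpow_le_rpow_of_exponent_le hQ.le <| by
        linarith [ordBound_le_add_pow_mul_ordBound_sub hQ hξ'0 hξ' hk1 hkr hki]
    · simp [Real.rpow_nonneg hQ0.le]
  have hsum : ‖θ ^ q ^ i - θ‖ * ‖coeff ν (α i)‖ ≤ (q : ℝ) ^ ((q : ℝ) ^ i - c) := by
    rw [← norm_mul, ← coeff_C_mul, map_sub, hαrec i hi, map_sum]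
    exact IsUltrametricDist.norm_sum_le_of_forall_le_of_nonneg (by positivity) hterm
  have hpow : (q : ℝ) ^ ((q : ℝ) ^ i) = (q : ℝ) ^ q ^ i := by
    rw [← Real.rpow_natCast _ (q ^ i), Nat.cast_pow]
  rw [norm_pow_sub_self (hθ ▸ hQ) (one_lt_pow₀ hq hi.ne'), hθ, sub_eq_add_neg,
    Real.rpow_add hQ0, hpow] at hsum
  exact le_of_mul_le_mul_left hsum (by positivity)

theorem stmt4_general
    (K : Type) [NontriviallyNormedField K] [IsUltrametricDist K]
    (q : ℕ) (hq : IsPrimePow q)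
    (τK : K ≃+* K) (hτK : ∀ x : K, τK x = x ^ q)
    (s : ℕ) (r : ℕ) (hr : 0 < r)
    (θ : K) (hθ : ‖θ‖ = q)
    (A : ℕ → MvPowerSeries (Fin s) K) (hA : ∀ k, IsTate K s (A k))
    (α : ℕ → MvPowerSeries (Fin s) K) (hα0 : α 0 = 1)
    (hαrec : ∀ i : ℕ, 1 ≤ i →
      (MvPowerSeries.C (σ := Fin s) (R := K) (θ ^ q ^ i) - MvPowerSeries.C (σ := Fin s) (R := K) θ) * α i
        = ∑ k ∈ Finset.Icc 1 r,
            if k ≤ i then A k * (⇑(twPS K s τK.toRingHom))^[k] (α (i - k)) else 0)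
    (ξ : ℝ) (hξ : ∀ k ∈ Finset.Icc 1 r, gaussNorm K s (A k) ≤ (q : ℝ) ^ (-ξ)) :
    (∀ M : ℝ, ∃ N : ℕ, ∀ i ≥ N,
        gaussNorm K s (α i) ≤ (q : ℝ) ^ (-(M * (q : ℝ) ^ i))) ∧
    (0 ≤ ξ → ∀ i : ℕ,
        gaussNorm K s (α i) ≤ (q : ℝ) ^ (-((i : ℝ) * (q : ℝ) ^ i / r))) ∧
    (ξ < 0 → ∀ i : ℕ,
        gaussNorm K s (α i)
          ≤ (q : ℝ) ^ (-((q : ℝ) ^ i * ((i : ℝ) / r + ξ / ((q : ℝ) - 1))))) := by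
  have hQ : (1 : ℝ) < q := by exact_mod_cast hq.one_lt
  have hα (i : ℕ) : gaussNorm K s (α i) ≤ (q : ℝ) ^ (-ordBound q (min ξ 0) r i) :=
    gaussNorm_le_of_forall_norm_coeff_le <|
      norm_coeff_le_rpow_neg_ordBound hq.one_lt (τK := τK.toRingHom) hτK hθ
        (fun k hk ν => ((hA k).norm_coeff_le_gaussNorm ν).trans (hξ k hk))
        (min_le_right _ _) (min_le_left _ _) hα0 hαrec i
  have hα_le {i : ℕ} {e : ℝ} (he : e ≤ ordBound q (min ξ 0) r i) :
      gaussNorm K s (α i) ≤ (q : ℝ) ^ (-e) :=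
    (hα i).trans (Real.rpow_le_rpow_of_exponent_le hQ.le (neg_le_neg he))
  refine ⟨fun M => ?_, fun hξ0 i => ?_, fun hξ0 i => ?_⟩
  · obtain ⟨N, hN⟩ := eventually_atTop.1
      (eventually_mul_pow_le_ordBound hQ (min_le_right ξ 0) hr M)
    exact ⟨N, fun i hi => hα_le (hN i hi)⟩
  · exact hα_le (by simp [min_eq_right hξ0, ordBound])
  · rw [min_eq_left hξ0.le] at hα_le
    exact hα_le (pow_mul_add_le_ordBound hQ hξ0.le i)

/-- the exponential series `exp_φ = Σ α_i τ^i` of a Drinfeld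
`A[t_1,…,t_s]`-module `φ_θ = θ + A_1τ + ⋯ + A_rτ^r` is an entire operator:
`ord_∞(α_i)/q^i → ∞`, with the explicit bounds `ord_∞(α_i) ≥ i q^i/r` when
`ξ = inf_k ord_∞(A_k) ≥ 0` and `ord_∞(α_i) ≥ q^i (i/r + ξ/(q-1))` when `ξ < 0`.
(`ord_∞(f) ≥ B` is expressed as `‖f‖_∞ ≤ q^{-B}`.) -/
theorem stmt4
    (K : Type) [NontriviallyNormedField K] [IsUltrametricDist K] [CompleteSpace K]
    (q : ℕ) (hq : IsPrimePow q)
    (τK : K ≃+* K) (hτK : ∀ x : K, τK x = x ^ q)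
    (s : ℕ) (r : ℕ) (hr : 0 < r)
    (θ : K) (hθ : ‖θ‖ = q)
    (A : ℕ → MvPowerSeries (Fin s) K) (hA : ∀ k, IsTate K s (A k)) (hAr : A r ≠ 0)
    (α : ℕ → MvPowerSeries (Fin s) K) (hα0 : α 0 = 1)
    (hαT : ∀ i, IsTate K s (α i))
    (hαrec : ∀ i : ℕ, 1 ≤ i →
      (MvPowerSeries.C (σ := Fin s) (R := K) (θ ^ q ^ i) - MvPowerSeries.C (σ := Fin s) (R := K) θ) * α i
        = ∑ k ∈ Finset.Icc 1 r,
            if k ≤ i then A k * (⇑(twPS K s τK.toRingHom))^[k] (α (i - k)) else 0)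
    (ξ : ℝ) (hξ : ∀ k ∈ Finset.Icc 1 r, gaussNorm K s (A k) ≤ (q : ℝ) ^ (-ξ)) :
    (∀ M : ℝ, ∃ N : ℕ, ∀ i ≥ N,
        gaussNorm K s (α i) ≤ (q : ℝ) ^ (-(M * (q : ℝ) ^ i))) ∧
    (0 ≤ ξ → ∀ i : ℕ,
        gaussNorm K s (α i) ≤ (q : ℝ) ^ (-((i : ℝ) * (q : ℝ) ^ i / r))) ∧
    (ξ < 0 → ∀ i : ℕ,
        gaussNorm K s (α i)
          ≤ (q : ℝ) ^ (-((q : ℝ) ^ i * ((i : ℝ) / r + ξ / ((q : ℝ) - 1))))) :=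
  stmt4_general K q hq τK hτK s r hr θ hθ A hA α hα0 hαrec ξ hξ
end
end

section
/- Let φ be a rank-r Drinfeld A[t_1,…,t_s]-module with A_r ∈ 𝕋_s^×, with companion-type matrix Φ ∈ Mat_r(𝕋_s[z]) whose last row is ((z−θ)/A_r^{(−r)}, −A_1^{(−1)}/A_r^{(−r)}, …, −A_{r−1}^{(−r+1)}/A_r^{(−r)}) and whose upper part is the (r−1)×r matrix [0 | I_{r−1}]. If g = [g_1,…,g_r] ∈ Mat_{1×r}(𝕋_s[z]) satisfies g^{(−1)}Φ = g, then g = 0. -/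
open Filter

noncomputable section

/-- The companion-type matrix `Φ ∈ Mat_r(𝕋_s[z])` of a rank-`r` Drinfeld module:
rows `0,…,r-2` form `[0 | I_{r-1}]`, and the last row is
`((z-θ)/A_r^{(-r)}, -A_1^{(-1)}/A_r^{(-r)}, …, -A_{r-1}^{(-r+1)}/A_r^{(-r)})`,
where `uinv = (A_r^{(-r)})⁻¹`. -/
def PhiMat (K : Type) [NontriviallyNormedField K] (s : ℕ) (τK : K ≃+* K) (r : ℕ) (θ : K)
    (A : ℕ → MvPowerSeries (Fin s) K) (uinv : MvPowerSeries (Fin s) K) :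
    Matrix (Fin r) (Fin r) (Polynomial (MvPowerSeries (Fin s) K)) :=
  fun i j =>
    if (i : ℕ) + 1 < r then (if (j : ℕ) = (i : ℕ) + 1 then 1 else 0)
    else
      if (j : ℕ) = 0 then
        (Polynomial.X - Polynomial.C (MvPowerSeries.C (σ := Fin s) (R := K) θ)) * Polynomial.C uinv
      else
        - (Polynomial.C
            ((⇑(twPS K s (τK.symm : K ≃+* K).toRingHom))^[(j : ℕ)] (A j))
          * Polynomial.C uinv)

/-!
Compare `z`-degrees. The twist `g ↦ g^{(-1)}` preserves degrees, the first column of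
`g^{(-1)} Φ = g` multiplies `g_r^{(-1)}` by a polynomial of degree one, and every further column
adds to `g_k^{(-1)}` only a constant multiple of `g_r^{(-1)}`. Hence all `g_k` have degree
`deg g_r + 1`, and for `k = r` this forces `g_r = 0`, after which all `g_k` vanish.
-/

open Polynomial

theorem MvPowerSeries.map_injective {σ R S : Type*} [CommSemiring R] [CommSemiring S]
    {f : R →+* S} (hf : Function.Injective f) :
    Function.Injective (MvPowerSeries.map (σ := σ) f) := fun u v huv => by
  ext ν
  apply hf
  rw [← MvPowerSeries.coeff_map, ← MvPowerSeries.coeff_map, huv]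

namespace Polynomial

variable {R : Type*} [Semiring R]

theorem degree_add_eq_add_one_of_degree_le {p e : R[X]} {D : WithBot ℕ}
    (hp : p.degree = D + 1) (he : e.degree ≤ D) : (p + e).degree = D + 1 := by
  induction D using WithBot.recBotCoe with
  | bot =>
    have hp0 : p = 0 := degree_eq_bot.mp hp
    have he0 : e = 0 := degree_eq_bot.mp (le_bot_iff.mp he)
    simp [hp0, he0]
  | coe d =>
    rw [degree_add_eq_left_of_degree_lt, hp]
    exact he.trans_lt (hp ▸ WithBot.coe_lt_coe.mpr d.lt_succ_self)

/-- The columns of `g^{(-1)} Φ = g` for a companion-type matrix `Φ` with last row `(c, b₀, …)`. -/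
theorem eq_zero_of_map_companion_system [NoZeroDivisors R] {σ : R →+* R}
    (hσ : Function.Injective σ) {n : ℕ} {g : Fin (n + 1) → R[X]} {c : R[X]} {b : Fin n → R[X]}
    (hc : c.degree = 1) (hb : ∀ k, (b k).degree ≤ 0)
    (h0 : (g (Fin.last n)).map σ * c = g 0)
    (hsucc : ∀ k : Fin n, (g k.castSucc).map σ + (g (Fin.last n)).map σ * b k = g k.succ) :
    g = 0 := by
  set D := (g (Fin.last n)).degree
  have hmap : ∀ p : R[X], (p.map σ).degree = p.degree := degree_map_eq_of_injective hσ
  -- the case `g_n = 0` is covered too, since `⊥ + 1 = ⊥`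
  have hdeg : ∀ i, (g i).degree = D + 1 := by
    refine Fin.induction ?_ fun k ih => ?_
    · rw [← h0, degree_mul, hc, hmap]
    · rw [← hsucc k]
      refine degree_add_eq_add_one_of_degree_le (by rw [hmap, ih]) ?_
      calc ((g (Fin.last n)).map σ * b k).degree
          ≤ ((g (Fin.last n)).map σ).degree + (b k).degree := degree_mul_le _ _
        _ ≤ D + 0 := add_le_add (hmap _).le (hb k)
        _ = D := add_zero D
  have hD : D = ⊥ := by
    have hlast : D = D + 1 := hdeg (Fin.last n)
    clear_value D
    induction D using WithBot.recBotCoe with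
    | bot => rfl
    | coe d => exact absurd (WithBot.coe_inj.mp hlast) d.succ_ne_self.symm
  funext i
  exact degree_eq_bot.mp (by rw [hdeg i, hD]; rfl)

end Polynomial

section PhiMat

variable {K : Type} [NontriviallyNormedField K] {s : ℕ} {τK : K ≃+* K} {n : ℕ} {θ : K}
  {A : ℕ → MvPowerSeries (Fin s) K} {uinv : MvPowerSeries (Fin s) K}

theorem sum_mul_PhiMat_zero (v : Fin (n + 1) → (MvPowerSeries (Fin s) K)[X]) :
    ∑ i, v i * PhiMat K s τK (n + 1) θ A uinv i 0
      = v (Fin.last n) * ((X - C (MvPowerSeries.C θ)) * C uinv) := by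
  rw [Fin.sum_univ_castSucc, Finset.sum_eq_zero, zero_add]
  · simp [PhiMat]
  · intro i _
    simp [PhiMat]

theorem sum_mul_PhiMat_succ (v : Fin (n + 1) → (MvPowerSeries (Fin s) K)[X]) (k : Fin n) :
    ∑ i, v i * PhiMat K s τK (n + 1) θ A uinv i k.succ
      = v k.castSucc + v (Fin.last n) *
          -(C ((⇑(twPS K s τK.symm.toRingHom))^[k + 1] (A (k + 1))) * C uinv) := by
  rw [Fin.sum_univ_castSucc]
  congr 1
  · simp [PhiMat, Fin.val_inj]
  · simp [PhiMat]

end PhiMat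

theorem stmt9_general
    (K : Type) [NontriviallyNormedField K]
    (τK : K ≃+* K)
    (s : ℕ) (r : ℕ)
    (θ : K)
    (A : ℕ → MvPowerSeries (Fin s) K)
    (uinv : MvPowerSeries (Fin s) K)
    (huinv : (⇑(twPS K s (τK.symm : K ≃+* K).toRingHom))^[r] (A r) * uinv = 1)
    (g : Fin r → Polynomial (MvPowerSeries (Fin s) K))
    (hg : ∀ j : Fin r,
      ∑ i : Fin r, ((g i).map (twPS K s (τK.symm : K ≃+* K).toRingHom))
          * PhiMat K s τK r θ A uinv i j = g j) :
    ∀ i : Fin r, g i = 0 := by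
  intro i
  cases r with
  | zero => exact i.elim0
  | succ n =>
    have hu : uinv ≠ 0 := right_ne_zero_of_mul_eq_one huinv
    have hτ : Function.Injective (twPS K s τK.symm.toRingHom) :=
      MvPowerSeries.map_injective τK.symm.injective
    have h0 := (sum_mul_PhiMat_zero _).symm.trans (hg 0)
    have hsucc := fun k : Fin n => (sum_mul_PhiMat_succ _ k).symm.trans (hg k.succ)
    refine congrFun (eq_zero_of_map_companion_system hτ ?_ ?_ h0 hsucc) i
    · rw [degree_mul, degree_X_sub_C, degree_C hu, add_zero]
    · intro k
      rw [degree_neg, ← C_mul]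
      exact degree_C_le

/-- if a row vector `g ∈ Mat_{1×r}(𝕋_s[z])` satisfies `g^{(-1)}Φ = g` for
the companion matrix `Φ` of a rank-`r` Drinfeld module with `A_r ∈ 𝕋_s^×`, then `g = 0`. -/
theorem stmt9
    (K : Type) [NontriviallyNormedField K] [IsUltrametricDist K] [CompleteSpace K]
    (q : ℕ) (hq : IsPrimePow q)
    (τK : K ≃+* K) (hτK : ∀ x : K, τK x = x ^ q)
    (s : ℕ) (r : ℕ) (hr : 0 < r)
    (θ : K) (hθ : ‖θ‖ = q)
    (A : ℕ → MvPowerSeries (Fin s) K) (hA : ∀ k, IsTate K s (A k))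
    (uinv : MvPowerSeries (Fin s) K) (huinvT : IsTate K s uinv)
    (huinv : (⇑(twPS K s (τK.symm : K ≃+* K).toRingHom))^[r] (A r) * uinv = 1)
    (g : Fin r → Polynomial (MvPowerSeries (Fin s) K))
    (hgT : ∀ (i : Fin r) (n : ℕ), IsTate K s ((g i).coeff n))
    (hg : ∀ j : Fin r,
      ∑ i : Fin r, ((g i).map (twPS K s (τK.symm : K ≃+* K).toRingHom))
          * PhiMat K s τK r θ A uinv i j = g j) :
    ∀ i : Fin r, g i = 0 :=
  stmt9_general K τK s r θ A uinv huinv g hg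
end
end

section
/- Let φ be a Drinfeld A[t_1,…,t_s]-module of rank r with A_r ∈ 𝕋_s^×. Then for every biderivation η ∈ Der(φ) there exist a unique biderivation η* with deg_τ(η*_θ) ≤ r and a unique m ∈ τ𝕋_s[τ] such that η = η* + η^{{m}}, where η^{{m}}_a = mφ_a − am. -/
open Filter

noncomputable section

/-- The subring `𝔽_q[t_1,…,t_s]` of `𝕋_s`: generated by the variables and the
`𝔽_q`-constants (elements of `K` fixed by the `q`-power map). -/
def FqTSub (K : Type) [NontriviallyNormedField K] (s q : ℕ) :
    Subring (MvPowerSeries (Fin s) K) :=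
  Subring.closure
    (Set.range (MvPowerSeries.X : Fin s → MvPowerSeries (Fin s) K) ∪
      {f | ∃ x : K, x ^ q = x ∧ f = MvPowerSeries.C (σ := Fin s) (R := K) x})

/-- The subring `A[t_1,…,t_s] = 𝔽_q[θ][t_1,…,t_s]` of `𝕋_s`. -/
def AtsSub (K : Type) [NontriviallyNormedField K] (s q : ℕ) (θ : K) :
    Subring (MvPowerSeries (Fin s) K) :=
  Subring.closure
    ({MvPowerSeries.C (σ := Fin s) (R := K) θ} ∪
      Set.range (MvPowerSeries.X : Fin s → MvPowerSeries (Fin s) K) ∪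
      {f | ∃ x : K, x ^ q = x ∧ f = MvPowerSeries.C (σ := Fin s) (R := K) x})

/-- Multiplication in the twisted polynomial ring `𝕋_s[τ]` (with `τ f = f^{(1)} τ`),
where a twisted polynomial `Σ_i c_i τ^i` is encoded as the finitely supported
function `i ↦ c_i`. -/
def tmulPS (K : Type) [NontriviallyNormedField K] (s : ℕ)
    (tw : MvPowerSeries (Fin s) K →+* MvPowerSeries (Fin s) K)
    (f g : ℕ →₀ MvPowerSeries (Fin s) K) : ℕ →₀ MvPowerSeries (Fin s) K :=
  f.sum fun i c => g.sum fun j d => Finsupp.single (i + j) (c * (⇑tw)^[i] d)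

/-- Left multiplication of a twisted polynomial by the scalar `c ∈ 𝕋_s`. -/
def cSMul (K : Type) [NontriviallyNormedField K] (s : ℕ)
    (c : MvPowerSeries (Fin s) K) (h : ℕ →₀ MvPowerSeries (Fin s) K) :
    ℕ →₀ MvPowerSeries (Fin s) K :=
  Finsupp.mapRange (fun x => c * x) (mul_zero c) h

/-- `φ : A[t_1,…,t_s] → 𝕋_s[τ]` is the Drinfeld-module structure map: an
`𝔽_q[t_1,…,t_s]`-algebra homomorphism into the twisted polynomial ring sending
`θ` to `Dθ = θ + A_1 τ + ⋯ + A_r τ^r`. -/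
def IsDrinfeldHom (K : Type) [NontriviallyNormedField K] (s q : ℕ) (θ : K)
    (tw : MvPowerSeries (Fin s) K →+* MvPowerSeries (Fin s) K)
    (Dθ : ℕ →₀ MvPowerSeries (Fin s) K)
    (φ : AtsSub K s q θ → (ℕ →₀ MvPowerSeries (Fin s) K)) : Prop :=
  (∀ a b, φ (a + b) = φ a + φ b) ∧
  (∀ a b, φ (a * b) = tmulPS K s tw (φ a) (φ b)) ∧
  (∀ a : AtsSub K s q θ,
    (a : MvPowerSeries (Fin s) K) = MvPowerSeries.C (σ := Fin s) (R := K) θ → φ a = Dθ) ∧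
  (∀ a : AtsSub K s q θ, (a : MvPowerSeries (Fin s) K) ∈ FqTSub K s q →
    φ a = Finsupp.single 0 (a : MvPowerSeries (Fin s) K)) ∧
  (∀ a n, IsTate K s (φ a n))

/-- `η` is a biderivation for `φ`: an `𝔽_q[t_1,…,t_s]`-linear map
`A[t_1,…,t_s] → τ𝕋_s[τ]` with `η_{ab} = a η_b + η_a φ_b`. -/
def IsBider (K : Type) [NontriviallyNormedField K] (s q : ℕ) (θ : K)
    (tw : MvPowerSeries (Fin s) K →+* MvPowerSeries (Fin s) K)
    (φ : AtsSub K s q θ → (ℕ →₀ MvPowerSeries (Fin s) K))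
    (η : AtsSub K s q θ → (ℕ →₀ MvPowerSeries (Fin s) K)) : Prop :=
  (∀ a b, η (a + b) = η a + η b) ∧
  (∀ v a : AtsSub K s q θ, (v : MvPowerSeries (Fin s) K) ∈ FqTSub K s q →
    η (v * a) = cSMul K s (v : MvPowerSeries (Fin s) K) (η a)) ∧
  (∀ a, η a 0 = 0) ∧
  (∀ a n, IsTate K s (η a n)) ∧
  (∀ a b, η (a * b)
    = cSMul K s (a : MvPowerSeries (Fin s) K) (η b) + tmulPS K s tw (η a) (φ b))


/-!
For a twisted polynomial `m` of `τ`-degree `i ≥ 1`, the polynomial `m φ_θ - θ m` has degree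
`i + r` and leading coefficient `m_i A_r^{(i)}`, where `A_r^{(i)}` is a unit. So the coefficients
of `η_θ` above degree `r` can be cancelled one at a time, from the top down, by subtracting
`η^{(m)}` for suitable monomials `m`; the difference `η - η^{(m)}` is a biderivation because inner
biderivations are. The same leading-coefficient computation shows that a nonzero strictly inner
biderivation has `θ`-degree `> r`, whence uniqueness. All coefficients stay in the Tate algebra,
which is a ring stable under the `q`-th power twist.
-/

open MvPowerSeries

section Tate

variable {K : Type} [NontriviallyNormedField K] {s : ℕ}

lemma isTate_iff_tendsto (f : MvPowerSeries (Fin s) K) :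
    IsTate K s f ↔ Tendsto (fun ν => coeff ν f) cofinite (nhds 0) := by
  simp only [NormedAddGroup.tendsto_nhds_zero, eventually_cofinite, not_lt, IsTate]

lemma isTate_of_coeff_eq_zero_of_ne {f : MvPowerSeries (Fin s) K} (ν₀ : Fin s →₀ ℕ)
    (hf : ∀ ν, ν ≠ ν₀ → coeff ν f = 0) : IsTate K s f :=
  fun ε hε => (Set.finite_singleton ν₀).subset fun ν hν => by
    by_contra h
    simp only [Set.mem_ofPred_eq, hf ν h, norm_zero] at hν
    linarith

lemma IsTate.exists_norm_coeff_le {f : MvPowerSeries (Fin s) K} (hf : IsTate K s f) :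
    ∃ B > 0, ∀ ν, ‖coeff ν f‖ ≤ B := by
  obtain ⟨B, hB⟩ := ((isTate_iff_tendsto f).mp hf).norm.bddAbove_range_of_cofinite
  exact ⟨max B 1, by positivity, fun ν => (hB ⟨ν, rfl⟩).trans (le_max_left _ _)⟩

lemma IsTate.mul [IsUltrametricDist K] {f g : MvPowerSeries (Fin s) K}
    (hf : IsTate K s f) (hg : IsTate K s g) : IsTate K s (f * g) := by
  obtain ⟨A, hA0, hA⟩ := hf.exists_norm_coeff_le
  obtain ⟨B, hB0, hB⟩ := hg.exists_norm_coeff_le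
  intro ε hε
  refine (((hf (ε / B) (by positivity)).prod (hg (ε / A) (by positivity))).image
    fun p => p.1 + p.2).subset fun ν hν => ?_
  -- in an ultrametric field some term of the convolution sum dominates the sum
  obtain ⟨p, hp, hle⟩ := IsUltrametricDist.exists_norm_finsetSum_le_of_nonempty
    ⟨(0, ν), Finset.HasAntidiagonal.mem_antidiagonal.mpr (zero_add ν)⟩
    fun p : (Fin s →₀ ℕ) × (Fin s →₀ ℕ) => coeff p.1 f * coeff p.2 g
  have hε' : ε ≤ ‖coeff p.1 f‖ * ‖coeff p.2 g‖ := by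
    rw [← norm_mul]
    exact hν.trans (coeff_mul ν f g ▸ hle)
  refine ⟨p, ⟨?_, ?_⟩, Finset.HasAntidiagonal.mem_antidiagonal.mp hp⟩
  · rw [Set.mem_ofPred_eq, div_le_iff₀ hB0]
    exact hε'.trans (mul_le_mul_of_nonneg_left (hB _) (norm_nonneg _))
  · rw [Set.mem_ofPred_eq, div_le_iff₀' hA0]
    exact hε'.trans (mul_le_mul_of_nonneg_right (hA _) (norm_nonneg _))

variable (K s) in
def tateSubring [IsUltrametricDist K] : Subring (MvPowerSeries (Fin s) K) where
  carrier := {f | IsTate K s f}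
  mul_mem' := IsTate.mul
  one_mem' := isTate_of_coeff_eq_zero_of_ne 0 fun ν h => by simp [coeff_one, h]
  add_mem' {f g} hf hg := (isTate_iff_tendsto _).mpr <| by
    simpa using ((isTate_iff_tendsto f).mp hf).add ((isTate_iff_tendsto g).mp hg)
  zero_mem' := isTate_of_coeff_eq_zero_of_ne 0 fun ν _ => map_zero _
  neg_mem' {f} hf := (isTate_iff_tendsto _).mpr <| by
    simpa using ((isTate_iff_tendsto f).mp hf).neg

lemma atsSub_le_tateSubring [IsUltrametricDist K] (q : ℕ) (θ : K) :
    AtsSub K s q θ ≤ tateSubring K s := by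
  have hC : ∀ x : K, IsTate K s (C x) := fun x =>
    isTate_of_coeff_eq_zero_of_ne 0 fun ν h => by simp [coeff_C, h]
  refine Subring.closure_le.mpr ?_
  rintro f ((rfl | ⟨i, rfl⟩) | ⟨x, -, rfl⟩)
  · exact hC θ
  · exact isTate_of_coeff_eq_zero_of_ne (Finsupp.single i 1) fun ν h => by simp [coeff_X, h]
  · exact hC x

lemma isTate_twPS {q : ℕ} (hq : q ≠ 0) {τ : K →+* K} (hτ : ∀ x, τ x = x ^ q)
    {f : MvPowerSeries (Fin s) K} (hf : IsTate K s f) : IsTate K s (twPS K s τ f) := by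
  rw [isTate_iff_tendsto] at hf ⊢
  simpa [twPS, hτ, zero_pow hq] using hf.pow q

lemma twPS_eq_self_of_mem_FqTSub {q : ℕ} {τ : K →+* K} (hτ : ∀ x, τ x = x ^ q)
    {v : MvPowerSeries (Fin s) K} (hv : v ∈ FqTSub K s q) : twPS K s τ v = v := by
  suffices FqTSub K s q ≤ RingHom.eqLocus (twPS K s τ) (RingHom.id _) from this hv
  refine Subring.closure_le.mpr ?_
  rintro f (⟨i, rfl⟩ | ⟨x, hx, rfl⟩)
  · exact map_X τ i
  · exact (map_C τ x).trans (by rw [hτ, hx]; rfl)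

end Tate

section TwistedPolynomial

variable {K : Type} [NontriviallyNormedField K] {s : ℕ}
  (tw : MvPowerSeries (Fin s) K →+* MvPowerSeries (Fin s) K)

lemma cSMul_eq_smul (c : MvPowerSeries (Fin s) K) (h : ℕ →₀ MvPowerSeries (Fin s) K) :
    cSMul K s c h = c • h := rfl

lemma cSMul_apply (c : MvPowerSeries (Fin s) K) (h : ℕ →₀ MvPowerSeries (Fin s) K) (n : ℕ) :
    cSMul K s c h n = c * h n := rfl

lemma tmulPS_apply (f g : ℕ →₀ MvPowerSeries (Fin s) K) (n : ℕ) :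
    tmulPS K s tw f g n = ∑ i ∈ Finset.range (n + 1), f i * tw^[i] (g (n - i)) := by
  classical
  let F (p : ℕ × ℕ) := f p.1 * tw^[p.1] (g p.2)
  have hF : ∀ p, F p ≠ 0 → p.1 ∈ f.support ∧ p.2 ∈ g.support := fun p hp => by
    refine ⟨Finsupp.mem_support_iff.mpr fun h => hp ?_, Finsupp.mem_support_iff.mpr fun h => hp ?_⟩
    · simp [F, h]
    · simp [F, h, iterate_map_zero]
  calc tmulPS K s tw f g n
      = ∑ p ∈ f.support ×ˢ g.support with p.1 + p.2 = n, F p := by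
        simp [tmulPS, Finsupp.single_apply, Finset.sum_filter, Finset.sum_product, Finsupp.sum, F,
          ← ite_and]
    _ = ∑ p ∈ Finset.HasAntidiagonal.antidiagonal n, F p := by
        refine Finset.sum_subset (fun p hp => by simp_all) fun p hp hp' => ?_
        by_contra h
        exact hp' (by simpa [Finset.HasAntidiagonal.mem_antidiagonal.mp hp] using hF p h)
    _ = _ := Finset.Nat.sum_antidiagonal_eq_sum_range_succ (fun i j => F (i, j)) n

lemma tmulPS_add_left (f f' g : ℕ →₀ MvPowerSeries (Fin s) K) :
    tmulPS K s tw (f + f') g = tmulPS K s tw f g + tmulPS K s tw f' g := by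
  ext1 n
  simp only [tmulPS_apply, Finsupp.add_apply, add_mul, Finset.sum_add_distrib]

lemma tmulPS_sub_left (f f' g : ℕ →₀ MvPowerSeries (Fin s) K) :
    tmulPS K s tw (f - f') g = tmulPS K s tw f g - tmulPS K s tw f' g := by
  ext1 n
  simp only [tmulPS_apply, Finsupp.sub_apply, sub_mul, Finset.sum_sub_distrib]

lemma tmulPS_add_right (f g g' : ℕ →₀ MvPowerSeries (Fin s) K) :
    tmulPS K s tw f (g + g') = tmulPS K s tw f g + tmulPS K s tw f g' := by
  ext1 n
  simp only [tmulPS_apply, Finsupp.add_apply, iterate_map_add, mul_add, Finset.sum_add_distrib]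

lemma tmulPS_zero_left (g : ℕ →₀ MvPowerSeries (Fin s) K) : tmulPS K s tw 0 g = 0 := by
  ext1 n
  simp [tmulPS_apply]

lemma tmulPS_zero_right (f : ℕ →₀ MvPowerSeries (Fin s) K) : tmulPS K s tw f 0 = 0 := by
  ext1 n
  simp [tmulPS_apply, iterate_map_zero]

lemma tmulPS_single_single (i j : ℕ) (c d : MvPowerSeries (Fin s) K) :
    tmulPS K s tw (Finsupp.single i c) (Finsupp.single j d)
      = Finsupp.single (i + j) (c * tw^[i] d) := by
  simp [tmulPS, Finsupp.sum_single_index, iterate_map_zero]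

lemma tmulPS_assoc (f g h : ℕ →₀ MvPowerSeries (Fin s) K) :
    tmulPS K s tw (tmulPS K s tw f g) h = tmulPS K s tw f (tmulPS K s tw g h) := by
  induction f using Finsupp.induction_linear with
  | zero => simp only [tmulPS_zero_left]
  | add f f' hf hf' => simp only [tmulPS_add_left, hf, hf']
  | single i a =>
    induction g using Finsupp.induction_linear with
    | zero => simp only [tmulPS_zero_left, tmulPS_zero_right]
    | add g g' hg hg' => simp only [tmulPS_add_left, tmulPS_add_right, hg, hg']
    | single j b =>
      induction h using Finsupp.induction_linear with
      | zero => simp only [tmulPS_zero_right]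
      | add h h' hh hh' => simp only [tmulPS_add_right, hh, hh']
      | single k c =>
        simp only [tmulPS_single_single, iterate_map_mul, Function.iterate_add_apply, mul_assoc,
          add_assoc]

lemma tmulPS_smul_left (c : MvPowerSeries (Fin s) K) (f g : ℕ →₀ MvPowerSeries (Fin s) K) :
    tmulPS K s tw (c • f) g = c • tmulPS K s tw f g := by
  ext1 n
  simp only [tmulPS_apply, Finsupp.smul_apply, smul_eq_mul, Finset.mul_sum, mul_assoc]

lemma tmulPS_smul_right_of_fixed {c : MvPowerSeries (Fin s) K} (hc : tw c = c)
    (f g : ℕ →₀ MvPowerSeries (Fin s) K) :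
    tmulPS K s tw f (c • g) = c • tmulPS K s tw f g := by
  ext1 n
  simp only [tmulPS_apply, Finsupp.smul_apply, smul_eq_mul, Finset.mul_sum, iterate_map_mul,
    Function.iterate_fixed hc, mul_left_comm]

lemma tmulPS_single_zero_left (c : MvPowerSeries (Fin s) K) (g : ℕ →₀ MvPowerSeries (Fin s) K) :
    tmulPS K s tw (Finsupp.single 0 c) g = c • g := by
  ext1 n
  rw [tmulPS_apply, Finset.sum_eq_single 0 (fun i _ hi => by simp [hi]) (by simp)]
  simp

lemma tmulPS_apply_zero (f g : ℕ →₀ MvPowerSeries (Fin s) K) :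
    tmulPS K s tw f g 0 = f 0 * g 0 := by
  simp [tmulPS_apply]

variable {tw} {i r : ℕ} {f g : ℕ →₀ MvPowerSeries (Fin s) K}

lemma tmulPS_apply_add_of_vanish (hf : ∀ k, i < k → f k = 0) (hg : ∀ k, r < k → g k = 0) :
    tmulPS K s tw f g (i + r) = f i * tw^[i] (g r) := by
  rw [tmulPS_apply, Finset.sum_eq_single i _ (by simp)]
  · rw [Nat.add_sub_cancel_left]
  · intro k _ hk
    rcases lt_or_gt_of_ne hk with hk | hk
    · rw [hg _ (by omega), iterate_map_zero, mul_zero]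
    · rw [hf k hk, zero_mul]

lemma tmulPS_apply_eq_zero_of_vanish (hf : ∀ k, i < k → f k = 0) (hg : ∀ k, r < k → g k = 0)
    {n : ℕ} (hn : i + r < n) : tmulPS K s tw f g n = 0 := by
  refine (tmulPS_apply tw f g n).trans (Finset.sum_eq_zero fun k _ => ?_)
  rcases le_or_gt k i with hk | hk
  · rw [hg _ (by omega), iterate_map_zero, mul_zero]
  · rw [hf k hk, zero_mul]

end TwistedPolynomial

section Reduction

variable {K : Type} [NontriviallyNormedField K] {s r : ℕ}
  {tw : MvPowerSeries (Fin s) K →+* MvPowerSeries (Fin s) K}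
  {D : ℕ →₀ MvPowerSeries (Fin s) K} {u c : MvPowerSeries (Fin s) K}

lemma isTate_tmulPS_apply [IsUltrametricDist K]
    (htw : Set.MapsTo tw (tateSubring K s) (tateSubring K s))
    {f g : ℕ →₀ MvPowerSeries (Fin s) K} (hf : ∀ n, IsTate K s (f n))
    (hg : ∀ n, IsTate K s (g n)) (n : ℕ) : IsTate K s (tmulPS K s tw f g n) := by
  rw [tmulPS_apply]
  exact sum_mem fun i _ => mul_mem (hf i) (htw.iterate i (hg _))

lemma eq_zero_of_tmulPS_sub_cSMul_apply_eq_zero (hr : 0 < r) (hD : ∀ n, r < n → D n = 0)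
    (hu : D r * u = 1) {m : ℕ →₀ MvPowerSeries (Fin s) K} (hm0 : m 0 = 0)
    (h : ∀ n, r < n → (tmulPS K s tw m D - cSMul K s c m) n = 0) : m = 0 := by
  by_contra hne
  obtain ⟨i, hi, hmax⟩ := m.support.exists_max_image id (Finsupp.support_nonempty_iff.mpr hne)
  have hi0 : m i ≠ 0 := Finsupp.mem_support_iff.mp hi
  have htop : ∀ k, i < k → m k = 0 := fun k hk =>
    Finsupp.notMem_support_iff.mp fun hk' => (hmax k hk').not_gt hk
  have hipos : 0 < i := Nat.pos_of_ne_zero fun h0 => hi0 (h0 ▸ hm0)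
  have hlead : m i * tw^[i] (D r) = 0 := by
    simpa [tmulPS_apply_add_of_vanish htop hD, cSMul_eq_smul, htop (i + r) (by omega)]
      using h (i + r) (by omega)
  exact hi0 (by
    rw [← mul_one (m i), ← iterate_map_one tw i, ← hu, iterate_map_mul, ← mul_assoc, hlead,
      zero_mul])

-- the leading coefficient is `g_{j+r} τ^j(u) τ^j(D_r) = g_{j+r}`
lemma tmulPS_single_sub_cSMul_single_apply (hr : 0 < r) (hD : ∀ n, r < n → D n = 0)
    (hu : D r * u = 1) {j : ℕ} {g : ℕ →₀ MvPowerSeries (Fin s) K}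
    (hg : ∀ n, j + r < n → g n = 0) {n : ℕ} (hn : j + r ≤ n) :
    (tmulPS K s tw (Finsupp.single j (g (j + r) * tw^[j] u)) D
      - cSMul K s c (Finsupp.single j (g (j + r) * tw^[j] u))) n = g n := by
  have hm : ∀ k, j < k → Finsupp.single j (g (j + r) * tw^[j] u) k = 0 :=
    fun k hk => Finsupp.single_eq_of_ne (by omega)
  rw [Finsupp.sub_apply, cSMul_apply, hm n (by omega), mul_zero, sub_zero]
  rcases hn.eq_or_lt with rfl | hn
  · rw [tmulPS_apply_add_of_vanish hm hD, Finsupp.single_eq_same, mul_assoc, ← iterate_map_mul,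
      mul_comm u, hu, iterate_map_one, mul_one]
  · rw [tmulPS_apply_eq_zero_of_vanish hm hD hn, hg n hn]

lemma exists_tmulPS_sub_cSMul_apply_eq [IsUltrametricDist K] (hr : 0 < r)
    (hD : ∀ n, r < n → D n = 0) (hDT : ∀ n, IsTate K s (D n)) (hu : D r * u = 1)
    (huT : IsTate K s u) (hcT : IsTate K s c)
    (htw : Set.MapsTo tw (tateSubring K s) (tateSubring K s))
    (g : ℕ →₀ MvPowerSeries (Fin s) K) (hgT : ∀ n, IsTate K s (g n)) :
    ∃ m : ℕ →₀ MvPowerSeries (Fin s) K, m 0 = 0 ∧ (∀ n, IsTate K s (m n)) ∧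
      ∀ n, r < n → (tmulPS K s tw m D - cSMul K s c m) n = g n := by
  suffices key : ∀ N, r ≤ N → ∀ g : ℕ →₀ MvPowerSeries (Fin s) K, (∀ n, N < n → g n = 0) →
      (∀ n, IsTate K s (g n)) → ∃ m : ℕ →₀ MvPowerSeries (Fin s) K, m 0 = 0 ∧
        (∀ n, IsTate K s (m n)) ∧ ∀ n, r < n → (tmulPS K s tw m D - cSMul K s c m) n = g n by
    refine key (max r (g.support.sup id)) (le_max_left _ _) g (fun n hn => ?_) hgT
    exact Finsupp.notMem_support_iff.mp fun h =>
      (Finset.le_sup (f := id) h).not_gt ((le_max_right _ _).trans_lt hn)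
  intro N hN
  induction N, hN using Nat.le_induction with
  | base =>
    exact fun g hg _ => ⟨0, rfl, fun _ => isTate_of_coeff_eq_zero_of_ne 0 fun _ _ => map_zero _,
      fun n hn => by simp [tmulPS_zero_left, cSMul_eq_smul, hg n hn]⟩
  | succ N hN ih =>
    intro g hg hgT
    obtain ⟨j, hj⟩ : ∃ j, N + 1 = j + r := ⟨N + 1 - r, by omega⟩
    rw [hj] at hg
    set m₁ := Finsupp.single j (g (j + r) * tw^[j] u)
    have hm₁T : ∀ n, IsTate K s (m₁ n) := fun n => by
      simp only [m₁, Finsupp.single_apply]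
      split_ifs
      exacts [mul_mem (hgT _) (htw.iterate _ huT), zero_mem (tateSubring K s)]
    obtain ⟨m, hm0, hmT, hm⟩ := ih (g - (tmulPS K s tw m₁ D - cSMul K s c m₁))
      (fun n hn => by
        rw [Finsupp.sub_apply, sub_eq_zero]
        exact (tmulPS_single_sub_cSMul_single_apply hr hD hu hg (by omega)).symm)
      fun n => by
        rw [Finsupp.sub_apply, Finsupp.sub_apply, cSMul_apply]
        exact sub_mem (hgT n) (sub_mem (isTate_tmulPS_apply htw hm₁T hDT n)
          ((tateSubring K s).mul_mem hcT (hm₁T n)))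
    refine ⟨m₁ + m, ?_, fun n => (tateSubring K s).add_mem (hm₁T n) (hmT n), fun n hn => ?_⟩
    · rw [Finsupp.add_apply, hm0, Finsupp.single_eq_of_ne (by omega), add_zero]
    · have := hm n hn
      simp only [tmulPS_add_left, cSMul_eq_smul, smul_add, Finsupp.sub_apply,
        Finsupp.add_apply] at this ⊢
      linear_combination this

end Reduction

section Biderivation

variable {K : Type} [NontriviallyNormedField K] {s q : ℕ} {θ : K}
  {tw : MvPowerSeries (Fin s) K →+* MvPowerSeries (Fin s) K}

def innerBiderivation (tw : MvPowerSeries (Fin s) K →+* MvPowerSeries (Fin s) K)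
    (φ : AtsSub K s q θ → (ℕ →₀ MvPowerSeries (Fin s) K)) (m : ℕ →₀ MvPowerSeries (Fin s) K)
    (a : AtsSub K s q θ) : ℕ →₀ MvPowerSeries (Fin s) K :=
  tmulPS K s tw m (φ a) - cSMul K s a m

variable {φ η η' : AtsSub K s q θ → (ℕ →₀ MvPowerSeries (Fin s) K)}

lemma innerBiderivation_sub (m m' : ℕ →₀ MvPowerSeries (Fin s) K) :
    innerBiderivation tw φ (m - m') = innerBiderivation tw φ m - innerBiderivation tw φ m' := by
  funext a
  simp only [innerBiderivation, Pi.sub_apply, tmulPS_sub_left, cSMul_eq_smul, smul_sub]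
  abel

lemma IsBider.sub [IsUltrametricDist K] (hη : IsBider K s q θ tw φ η)
    (hη' : IsBider K s q θ tw φ η') :
    IsBider K s q θ tw φ (η - η') := by
  obtain ⟨hadd, hlin, hzero, hT, hmul⟩ := hη
  obtain ⟨hadd', hlin', hzero', hT', hmul'⟩ := hη'
  refine ⟨fun a b => ?_, fun v a hv => ?_, fun a => ?_, fun a n => ?_, fun a b => ?_⟩
  · simp only [Pi.sub_apply, hadd, hadd']
    abel
  · simp only [Pi.sub_apply, hlin v a hv, hlin' v a hv, cSMul_eq_smul, smul_sub]
  · simp only [Pi.sub_apply, Finsupp.sub_apply, hzero, hzero', sub_zero]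
  · exact (tateSubring K s).sub_mem (hT a n) (hT' a n)
  · simp only [Pi.sub_apply, hmul, hmul', cSMul_eq_smul, smul_sub, tmulPS_sub_left]
    abel

lemma isBider_innerBiderivation [IsUltrametricDist K] {Dθ : ℕ →₀ MvPowerSeries (Fin s) K}
    (hφ : IsDrinfeldHom K s q θ tw Dθ φ) (hfix : ∀ v ∈ FqTSub K s q, tw v = v)
    (htw : Set.MapsTo tw (tateSubring K s) (tateSubring K s))
    {m : ℕ →₀ MvPowerSeries (Fin s) K} (hm0 : m 0 = 0) (hm : ∀ n, IsTate K s (m n)) :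
    IsBider K s q θ tw φ (innerBiderivation tw φ m) := by
  obtain ⟨hadd, hmul, -, hFq, hT⟩ := hφ
  refine ⟨fun a b => ?_, fun v a hv => ?_, fun a => ?_, fun a n => ?_, fun a b => ?_⟩
  · simp only [innerBiderivation, hadd, tmulPS_add_right, Subring.coe_add, cSMul_eq_smul,
      add_smul]
    abel
  · simp only [innerBiderivation, hmul, hFq v hv, tmulPS_single_zero_left,
      tmulPS_smul_right_of_fixed tw (hfix v hv), Subring.coe_mul, cSMul_eq_smul, smul_sub,
      mul_smul]
  · simp [innerBiderivation, tmulPS_apply_zero, hm0, cSMul_eq_smul]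
  · exact sub_mem (isTate_tmulPS_apply htw hm (hT a) n)
      (mul_mem (atsSub_le_tateSubring q θ a.2) (hm n))
  · simp only [innerBiderivation, hmul, Subring.coe_mul, cSMul_eq_smul, smul_sub, mul_smul,
      tmulPS_sub_left, tmulPS_smul_left, tmulPS_assoc]
    abel

lemma eq_of_innerBiderivation_apply_eq {r : ℕ} {D : ℕ →₀ MvPowerSeries (Fin s) K}
    {u : MvPowerSeries (Fin s) K} {θD : AtsSub K s q θ} (hr : 0 < r) (hφθ : φ θD = D)
    (hD : ∀ n, r < n → D n = 0) (hu : D r * u = 1) {m m' : ℕ →₀ MvPowerSeries (Fin s) K}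
    (hm0 : m 0 = 0) (hm'0 : m' 0 = 0)
    (h : ∀ n, r < n → innerBiderivation tw φ m θD n = innerBiderivation tw φ m' θD n) :
    m = m' := by
  rw [← sub_eq_zero]
  refine eq_zero_of_tmulPS_sub_cSMul_apply_eq_zero (tw := tw) (c := θD) hr hD hu
    (by simp [hm0, hm'0]) fun n hn => ?_
  rw [← hφθ]
  change innerBiderivation tw φ (m - m') θD n = 0
  rw [innerBiderivation_sub, Pi.sub_apply, Finsupp.sub_apply, h n hn, sub_self]

end Biderivation

theorem stmt12_general
    (K : Type) [NontriviallyNormedField K] [IsUltrametricDist K]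
    (q : ℕ) (hq : IsPrimePow q)
    (τK : K ≃+* K) (hτK : ∀ x : K, τK x = x ^ q)
    (s : ℕ) (r : ℕ) (hr : 0 < r)
    (θ : K)
    (Dθ : ℕ →₀ MvPowerSeries (Fin s) K)
    (hDθtop : ∀ n : ℕ, r < n → Dθ n = 0)
    (hDθT : ∀ n, IsTate K s (Dθ n))
    (uinv : MvPowerSeries (Fin s) K) (huinvT : IsTate K s uinv)
    (huinv : Dθ r * uinv = 1)
    (φ : AtsSub K s q θ → (ℕ →₀ MvPowerSeries (Fin s) K))
    (hφ : IsDrinfeldHom K s q θ (twPS K s τK.toRingHom) Dθ φ)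
    (θD : AtsSub K s q θ)
    (hθD : (θD : MvPowerSeries (Fin s) K) = MvPowerSeries.C (σ := Fin s) (R := K) θ)
    (η : AtsSub K s q θ → (ℕ →₀ MvPowerSeries (Fin s) K))
    (hη : IsBider K s q θ (twPS K s τK.toRingHom) φ η) :
    ∃ (ηs : AtsSub K s q θ → (ℕ →₀ MvPowerSeries (Fin s) K))
      (mm : ℕ →₀ MvPowerSeries (Fin s) K),
      IsBider K s q θ (twPS K s τK.toRingHom) φ ηs ∧
      mm 0 = 0 ∧ (∀ n, IsTate K s (mm n)) ∧
      (∀ a : AtsSub K s q θ,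
        η a = ηs a + (tmulPS K s (twPS K s τK.toRingHom) mm (φ a)
          - cSMul K s (a : MvPowerSeries (Fin s) K) mm)) ∧
      (∀ n : ℕ, r < n → ηs θD n = 0) ∧
      (∀ (ηs' : AtsSub K s q θ → (ℕ →₀ MvPowerSeries (Fin s) K))
        (mm' : ℕ →₀ MvPowerSeries (Fin s) K),
        IsBider K s q θ (twPS K s τK.toRingHom) φ ηs' →
        mm' 0 = 0 → (∀ n, IsTate K s (mm' n)) →
        (∀ a : AtsSub K s q θ,
          η a = ηs' a + (tmulPS K s (twPS K s τK.toRingHom) mm' (φ a)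
            - cSMul K s (a : MvPowerSeries (Fin s) K) mm')) →
        (∀ n : ℕ, r < n → ηs' θD n = 0) →
        ηs' = ηs ∧ mm' = mm) := by
  set tw := twPS K s τK.toRingHom
  have htw : Set.MapsTo tw (tateSubring K s) (tateSubring K s) :=
    fun f hf => isTate_twPS hq.ne_zero hτK hf
  have hfix : ∀ v ∈ FqTSub K s q, tw v = v := fun v hv => twPS_eq_self_of_mem_FqTSub hτK hv
  have hφθ : φ θD = Dθ := hφ.2.2.1 θD hθD
  obtain ⟨m, hm0, hmT, hm⟩ := exists_tmulPS_sub_cSMul_apply_eq hr hDθtop hDθT huinv huinvT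
    (atsSub_le_tateSubring q θ θD.2) htw (η θD) (hη.2.2.2.1 θD)
  have hm' : ∀ n, r < n → innerBiderivation tw φ m θD n = η θD n := by
    rwa [innerBiderivation, hφθ]
  refine ⟨η - innerBiderivation tw φ m, m, hη.sub (isBider_innerBiderivation hφ hfix htw hm0 hmT),
    hm0, hmT, fun a => (sub_add_cancel _ _).symm, fun n hn => sub_eq_zero.mpr (hm' n hn).symm, ?_⟩
  intro η' m' _ hm'0 _ hdec hdeg
  obtain rfl : m' = m := eq_of_innerBiderivation_apply_eq hr hφθ hDθtop huinv hm'0 hm0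
    fun n hn => by
      have h := DFunLike.congr_fun (hdec θD) n
      rw [Finsupp.add_apply, hdeg n hn, zero_add] at h
      exact h.symm.trans (hm' n hn).symm
  exact ⟨funext fun a => eq_sub_of_add_eq (hdec a).symm, rfl⟩

/-- for `A_r ∈ 𝕋_s^×`, every biderivation `η` decomposes uniquely as
`η = η* + η^{(m)}` with `η*` a biderivation with `deg_τ η*_θ ≤ r` and
`η^{(m)}_a = m φ_a - a m` the strictly inner biderivation of some `m ∈ τ𝕋_s[τ]`. -/
theorem stmt12
    (K : Type) [NontriviallyNormedField K] [IsUltrametricDist K] [CompleteSpace K]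
    (q : ℕ) (hq : IsPrimePow q)
    (τK : K ≃+* K) (hτK : ∀ x : K, τK x = x ^ q)
    (s : ℕ) (r : ℕ) (hr : 0 < r)
    (θ : K) (hθ : ‖θ‖ = q)
    (Dθ : ℕ →₀ MvPowerSeries (Fin s) K)
    (hDθ0 : Dθ 0 = MvPowerSeries.C (σ := Fin s) (R := K) θ)
    (hDθtop : ∀ n : ℕ, r < n → Dθ n = 0)
    (hDθT : ∀ n, IsTate K s (Dθ n))
    (uinv : MvPowerSeries (Fin s) K) (huinvT : IsTate K s uinv)
    (huinv : Dθ r * uinv = 1)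
    (φ : AtsSub K s q θ → (ℕ →₀ MvPowerSeries (Fin s) K))
    (hφ : IsDrinfeldHom K s q θ (twPS K s τK.toRingHom) Dθ φ)
    (θD : AtsSub K s q θ)
    (hθD : (θD : MvPowerSeries (Fin s) K) = MvPowerSeries.C (σ := Fin s) (R := K) θ)
    (η : AtsSub K s q θ → (ℕ →₀ MvPowerSeries (Fin s) K))
    (hη : IsBider K s q θ (twPS K s τK.toRingHom) φ η) :
    ∃ (ηs : AtsSub K s q θ → (ℕ →₀ MvPowerSeries (Fin s) K))
      (mm : ℕ →₀ MvPowerSeries (Fin s) K),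
      IsBider K s q θ (twPS K s τK.toRingHom) φ ηs ∧
      mm 0 = 0 ∧ (∀ n, IsTate K s (mm n)) ∧
      (∀ a : AtsSub K s q θ,
        η a = ηs a + (tmulPS K s (twPS K s τK.toRingHom) mm (φ a)
          - cSMul K s (a : MvPowerSeries (Fin s) K) mm)) ∧
      (∀ n : ℕ, r < n → ηs θD n = 0) ∧
      (∀ (ηs' : AtsSub K s q θ → (ℕ →₀ MvPowerSeries (Fin s) K))
        (mm' : ℕ →₀ MvPowerSeries (Fin s) K),
        IsBider K s q θ (twPS K s τK.toRingHom) φ ηs' →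
        mm' 0 = 0 → (∀ n, IsTate K s (mm' n)) →
        (∀ a : AtsSub K s q θ,
          η a = ηs' a + (tmulPS K s (twPS K s τK.toRingHom) mm' (φ a)
            - cSMul K s (a : MvPowerSeries (Fin s) K) mm')) →
        (∀ n : ℕ, r < n → ηs' θD n = 0) →
        ηs' = ηs ∧ mm' = mm) :=
  stmt12_general K q hq τK hτK s r hr θ Dθ hDθtop hDθT uinv huinvT huinv φ hφ θD hθD η hη
end
end
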